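/- Let f : ℝ^d → ℝ be thrice differentiable whose Hessian is H-Lipschitz, let θ* satisfy ∇f(θ*) = 0 with ∇²f(θ*) positive semidefinite, and let ρ be a mean-zero probability measure on ℝ^d with E_{θ∼ρ}[θθᵀ] = c²·I for some c ≥ ‖θ*‖₂, c > 0. Set γ := 2√d·H·λ_max(∇²f(θ*))·M₃ + d·H²·M₄ and assume λ_max(EGOP(f)) + γ > 0. If L₁,…,L_d > 0 are constants with which f satisfies coordinate-wise smoothness on ℝ^d, then for every eigenpair (λ_k, v_k) of EGOP(f) with ‖v_k‖₂ = 1, Σᵢ Lᵢ ≥ (d/(2c)) · (β_k·λ_k − γ)/√(λ_max(EGOP(f)) + γ), where β_k := ‖v_k‖₁²/d. -/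

import Mathlib

/-! With `A = ∇²f(θ*)`, the Lipschitz Hessian gives `‖∇f θ - A (θ - θ*)‖ ≤ H ‖θ - θ*‖²`, so the
quadratic form of `EGOP f` is, up to `(2 H λ_max(A) M₃ + H² M₄) ‖u‖²`, that of the quadratic model:
`E⟪A u, θ - θ*⟫² = c² ‖A u‖² + ⟪A u, θ*⟫²`. Comparing with `λ_max(EGOP)` gives
`c ‖A‖ ≤ √(λ_max(EGOP) + γ)`, hence for the sign vector `s` of `v`,
`sᵀ EGOP s ≤ 2 c √(λ_max(EGOP) + γ) sᵀ A s + d γ`, and `sᵀ A s ≤ ∑ Lᵢ` by coordinate-wise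
smoothness. Cauchy–Schwarz for the EGOP form gives `λ ‖v‖₁² = λ ⟪s, v⟫² ≤ sᵀ EGOP s`. -/

open MeasureTheory Matrix
open scoped RealInnerProductSpace

noncomputable section

variable {d : ℕ}

/-- Expected gradient outer product matrix of `f` w.r.t. measure `ρ`. -/
def EGOP (f : EuclideanSpace ℝ (Fin d) → ℝ) (ρ : Measure (EuclideanSpace ℝ (Fin d))) :
    Matrix (Fin d) (Fin d) ℝ :=
  fun i j => ∫ θ, gradient f θ i * gradient f θ j ∂ρ

/-- Hessian matrix of `f` at `θ`. -/
def hessMat (f : EuclideanSpace ℝ (Fin d) → ℝ) (θ : EuclideanSpace ℝ (Fin d)) :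
    Matrix (Fin d) (Fin d) ℝ :=
  fun i j => fderiv ℝ (gradient f) θ (EuclideanSpace.single j (1:ℝ)) i

/-- ℓ₂ operator (spectral) norm of a matrix. -/
def opNormM (M : Matrix (Fin d) (Fin d) ℝ) : ℝ :=
  ‖LinearMap.toContinuousLinearMap (Matrix.toEuclideanLin M)‖

/-- Largest eigenvalue (Rayleigh characterization) of a symmetric matrix. -/
def lambdaMax (M : Matrix (Fin d) (Fin d) ℝ) : ℝ :=
  sSup {r : ℝ | ∃ v : EuclideanSpace ℝ (Fin d), ‖v‖ = 1 ∧ r = ⟪v, Matrix.toEuclideanLin M v⟫}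

/-- The Hessian of `f` is `H`-Lipschitz. -/
def HessLipschitz (f : EuclideanSpace ℝ (Fin d) → ℝ) (H : ℝ) : Prop :=
  ∀ θ₁ θ₂ : EuclideanSpace ℝ (Fin d), opNormM (hessMat f θ₁ - hessMat f θ₂) ≤ H * ‖θ₁ - θ₂‖

/-- Coordinate-wise smoothness with constants `L` within the set `Θ`. -/
def CoordSmoothOn (f : EuclideanSpace ℝ (Fin d) → ℝ) (L : Fin d → ℝ)
    (Θ : Set (EuclideanSpace ℝ (Fin d))) : Prop :=
  ∀ θ₁ ∈ Θ, ∀ θ₂ ∈ Θ,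
    |f θ₁ - f θ₂ - ⟪gradient f θ₂, θ₁ - θ₂⟫| ≤ (1/2) * ∑ i, L i * (θ₁ i - θ₂ i)^2

/-- Coordinate-wise smoothness with constants `L` on all of ℝ^d. -/
def CoordSmooth (f : EuclideanSpace ℝ (Fin d) → ℝ) (L : Fin d → ℝ) : Prop :=
  CoordSmoothOn f L Set.univ

theorem abs_add_sq_sub_sq_le {a b α β : ℝ} (ha : |a| ≤ α) (hb : |b| ≤ β) :
    |(a + b) ^ 2 - a ^ 2| ≤ 2 * α * β + β ^ 2 := by
  have hfac : (a + b) ^ 2 - a ^ 2 = b * (2 * a + b) := by ring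
  rw [hfac, abs_mul]
  calc |b| * |2 * a + b| ≤ β * (2 * α + β) := by
        gcongr
        · exact (abs_nonneg _).trans hb
        · calc |2 * a + b| ≤ |2 * a| + |b| := abs_add_le _ _
            _ ≤ 2 * α + β := by rw [abs_mul, abs_two]; linarith
    _ = 2 * α * β + β ^ 2 := by ring

namespace LinearMap.IsPositive

variable {E : Type*} [NormedAddCommGroup E] [InnerProductSpace ℝ E] {T : E →ₗ[ℝ] E}

theorem inner_sq_le (hT : T.IsPositive) (x y : E) :
    ⟪x, T y⟫ ^ 2 ≤ ⟪x, T x⟫ * ⟪y, T y⟫ := by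
  have hquad : ∀ t : ℝ, 0 ≤ ⟪y, T y⟫ * (t * t) + 2 * ⟪x, T y⟫ * t + ⟪x, T x⟫ := fun t => by
    have h := hT.inner_nonneg_right (x + t • y)
    have hyx : ⟪y, T x⟫ = ⟪x, T y⟫ := by rw [← hT.isSymmetric, real_inner_comm]
    simp only [map_add, map_smul, inner_add_left, inner_add_right, real_inner_smul_left,
      real_inner_smul_right, hyx] at h
    linarith
  have := discrim_le_zero hquad
  rw [discrim] at this
  linarith

theorem norm_sq_le_mul_inner (hT : T.IsPositive) {K : ℝ} (hK : ∀ y, ⟪y, T y⟫ ≤ K * ‖y‖ ^ 2)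
    (x : E) : ‖T x‖ ^ 2 ≤ K * ⟪x, T x⟫ := by
  have hTx : ‖T x‖ ^ 2 = ⟪x, T (T x)⟫ := by
    rw [← real_inner_self_eq_norm_sq, hT.isSymmetric]
  have hcs : ‖T x‖ ^ 2 * ‖T x‖ ^ 2 ≤ ⟪x, T x⟫ * (K * ‖T x‖ ^ 2) := by
    calc ‖T x‖ ^ 2 * ‖T x‖ ^ 2 = ⟪x, T (T x)⟫ ^ 2 := by rw [hTx, sq]
      _ ≤ ⟪x, T x⟫ * ⟪T x, T (T x)⟫ := hT.inner_sq_le x (T x)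
      _ ≤ ⟪x, T x⟫ * (K * ‖T x‖ ^ 2) :=
        mul_le_mul_of_nonneg_left (hK (T x)) (hT.inner_nonneg_right x)
  rcases (sq_nonneg ‖T x‖).eq_or_lt with h0 | hpos
  · have hTx0 : T x = 0 := by simpa using h0.symm
    simp [hTx0]
  · nlinarith

theorem mul_inner_sq_le_of_apply_eq_smul (hT : T.IsPositive) {v : E} {μ : ℝ} (hv : T v = μ • v)
    (hv1 : ‖v‖ = 1) (s : E) : μ * ⟪s, v⟫ ^ 2 ≤ ⟪s, T s⟫ := by
  have hvv : ⟪v, T v⟫ = μ := by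
    rw [hv, real_inner_smul_right, real_inner_self_eq_norm_sq, hv1]; ring
  have hμ : 0 ≤ μ := hvv ▸ hT.inner_nonneg_right v
  have hcs := hT.inner_sq_le s v
  rw [hvv, hv, real_inner_smul_right] at hcs
  rcases hμ.eq_or_lt with rfl | hμ
  · simpa using hT.inner_nonneg_right s
  · nlinarith

-- `q` plays the EGOP form and `c² ‖T u‖² + ⟪T u, θs⟫²` the EGOP form of the quadratic model;
-- the comparison first yields `c ‖T‖ ≤ √(Λ + ε)`.
theorem le_of_abs_sub_le_mul_norm_sq (hT : T.IsPositive) {q : E → ℝ} {c Λ ε : ℝ} {θs : E}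
    (hc : 0 < c) (hθs : ‖θs‖ ≤ c) (hqΛ : ∀ u, q u ≤ Λ * ‖u‖ ^ 2)
    (hq : ∀ u, |q u - (c ^ 2 * ‖T u‖ ^ 2 + ⟪T u, θs⟫ ^ 2)| ≤ ε * ‖u‖ ^ 2) (s : E) :
    q s ≤ 2 * c * √(Λ + ε) * ⟪s, T s⟫ + ε * ‖s‖ ^ 2 := by
  have hnorm : ∀ u, c * ‖T u‖ ≤ √(Λ + ε) * ‖u‖ := fun u => by
    rw [← Real.sqrt_sq (norm_nonneg u), ← Real.sqrt_mul' _ (sq_nonneg _)]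
    refine Real.le_sqrt_of_sq_le ?_
    nlinarith [(abs_le.mp (hq u)).1, hqΛ u, sq_nonneg ⟪T u, θs⟫]
  have hK : ∀ u, ⟪u, T u⟫ ≤ √(Λ + ε) / c * ‖u‖ ^ 2 := fun u =>
    calc ⟪u, T u⟫ ≤ ‖u‖ * ‖T u‖ := real_inner_le_norm _ _
      _ ≤ ‖u‖ * (√(Λ + ε) / c * ‖u‖) := by
        gcongr
        rw [div_mul_eq_mul_div, le_div_iff₀ hc]
        linarith [hnorm u]
      _ = √(Λ + ε) / c * ‖u‖ ^ 2 := by ring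
  have hcross : ⟪T s, θs⟫ ^ 2 ≤ c ^ 2 * ‖T s‖ ^ 2 := by
    rw [← mul_pow, ← sq_abs]
    gcongr
    calc |⟪T s, θs⟫| ≤ ‖T s‖ * ‖θs‖ := abs_real_inner_le_norm _ _
      _ ≤ ‖T s‖ * c := by gcongr
      _ = c * ‖T s‖ := mul_comm _ _
  calc q s ≤ c ^ 2 * ‖T s‖ ^ 2 + ⟪T s, θs⟫ ^ 2 + ε * ‖s‖ ^ 2 := by
        linarith [(abs_le.mp (hq s)).2]
    _ ≤ 2 * c ^ 2 * ‖T s‖ ^ 2 + ε * ‖s‖ ^ 2 := by linarith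
    _ ≤ 2 * c ^ 2 * (√(Λ + ε) / c * ⟪s, T s⟫) + ε * ‖s‖ ^ 2 := by
        gcongr
        exact hT.norm_sq_le_mul_inner hK s
    _ = 2 * c * √(Λ + ε) * ⟪s, T s⟫ + ε * ‖s‖ ^ 2 := by field_simp

end LinearMap.IsPositive

theorem inner_toEuclideanLin_eq_sum {ι : Type*} [Fintype ι] [DecidableEq ι] (M : Matrix ι ι ℝ)
    (x y : EuclideanSpace ℝ ι) : ⟪x, M.toEuclideanLin y⟫ = ∑ i, ∑ j, x i * y j * M i j := by
  simp [PiLp.inner_apply, Matrix.mulVec, dotProduct, Finset.mul_sum, mul_comm, mul_left_comm]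

theorem bddAbove_rayleigh (M : Matrix (Fin d) (Fin d) ℝ) :
    BddAbove {r : ℝ | ∃ v : EuclideanSpace ℝ (Fin d), ‖v‖ = 1 ∧ r = ⟪v, M.toEuclideanLin v⟫} := by
  refine ⟨‖(M.toEuclideanLin).toContinuousLinearMap‖, ?_⟩
  rintro _ ⟨v, hv, rfl⟩
  calc ⟪v, M.toEuclideanLin v⟫ ≤ ‖v‖ * ‖(M.toEuclideanLin).toContinuousLinearMap v‖ :=
        real_inner_le_norm _ _
    _ ≤ ‖(M.toEuclideanLin).toContinuousLinearMap‖ := by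
        simpa [hv] using (M.toEuclideanLin).toContinuousLinearMap.le_opNorm v

theorem inner_toEuclideanLin_le_lambdaMax_mul (M : Matrix (Fin d) (Fin d) ℝ)
    (x : EuclideanSpace ℝ (Fin d)) : ⟪x, M.toEuclideanLin x⟫ ≤ lambdaMax M * ‖x‖ ^ 2 := by
  rcases eq_or_ne x 0 with rfl | hx
  · simp
  have hx' : ‖x‖ ≠ 0 := norm_ne_zero_iff.mpr hx
  have hu : ‖‖x‖⁻¹ • x‖ = 1 := by rw [norm_smul, norm_inv, norm_norm, inv_mul_cancel₀ hx']
  have h := le_csSup (bddAbove_rayleigh M) ⟨_, hu, rfl⟩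
  rw [map_smul, real_inner_smul_left, real_inner_smul_right, ← mul_assoc, ← sq] at h
  calc ⟪x, M.toEuclideanLin x⟫ = ‖x‖ ^ 2 * ((‖x‖⁻¹) ^ 2 * ⟪x, M.toEuclideanLin x⟫) := by
        field_simp
    _ ≤ ‖x‖ ^ 2 * lambdaMax M := mul_le_mul_of_nonneg_left h (sq_nonneg _)
    _ = lambdaMax M * ‖x‖ ^ 2 := mul_comm _ _

namespace Matrix.PosSemidef

variable {M : Matrix (Fin d) (Fin d) ℝ}

theorem lambdaMax_nonneg (hM : M.PosSemidef) : 0 ≤ lambdaMax M :=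
  Real.sSup_nonneg <| by
    rintro _ ⟨v, -, rfl⟩
    exact (isPositive_toEuclideanLin_iff.mpr hM).inner_nonneg_right v

theorem norm_toEuclideanLin_le (hM : M.PosSemidef) (x : EuclideanSpace ℝ (Fin d)) :
    ‖M.toEuclideanLin x‖ ≤ lambdaMax M * ‖x‖ := by
  have hpos := isPositive_toEuclideanLin_iff.mpr hM
  have hlam := hM.lambdaMax_nonneg
  refine (pow_le_pow_iff_left₀ (norm_nonneg _) (by positivity) two_ne_zero).mp ?_
  calc ‖M.toEuclideanLin x‖ ^ 2 ≤ lambdaMax M * ⟪x, M.toEuclideanLin x⟫ :=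
        hpos.norm_sq_le_mul_inner (inner_toEuclideanLin_le_lambdaMax_mul M) x
    _ ≤ lambdaMax M * (lambdaMax M * ‖x‖ ^ 2) :=
        mul_le_mul_of_nonneg_left (inner_toEuclideanLin_le_lambdaMax_mul M x) hlam
    _ = (lambdaMax M * ‖x‖) ^ 2 := by ring

end Matrix.PosSemidef

section SignVector

variable {ι : Type*}

def signVec (v : EuclideanSpace ℝ ι) : EuclideanSpace ℝ ι :=
  WithLp.toLp 2 fun i => if 0 ≤ v i then 1 else -1

theorem signVec_apply (v : EuclideanSpace ℝ ι) (i : ι) :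
    signVec v i = if 0 ≤ v i then 1 else -1 :=
  rfl

theorem signVec_apply_sq (v : EuclideanSpace ℝ ι) (i : ι) : signVec v i ^ 2 = 1 := by
  rw [signVec_apply]; split_ifs <;> norm_num

theorem inner_signVec [Fintype ι] (v : EuclideanSpace ℝ ι) : ⟪signVec v, v⟫ = ∑ i, |v i| := by
  simp only [PiLp.inner_apply, RCLike.inner_apply, conj_trivial]
  refine Finset.sum_congr rfl fun i _ => ?_
  rw [signVec_apply]
  split_ifs with h
  · simp [abs_of_nonneg h]
  · simp [abs_of_neg (not_le.mp h)]

theorem norm_signVec_sq [Fintype ι] (v : EuclideanSpace ℝ ι) : ‖signVec v‖ ^ 2 = Fintype.card ι := by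
  simp [EuclideanSpace.real_norm_sq_eq, signVec_apply_sq]

end SignVector

section Moments

variable {α ι : Type*} [Fintype ι] [MeasurableSpace α] {μ : Measure α} {g : α → EuclideanSpace ℝ ι}

theorem integrable_inner (hg : ∀ i, Integrable (fun a => g a i) μ) (x : EuclideanSpace ℝ ι) :
    Integrable (fun a => ⟪x, g a⟫) μ := by
  simp only [PiLp.inner_apply, RCLike.inner_apply, conj_trivial]
  exact integrable_finsetSum _ fun i _ => (hg i).mul_const _

theorem integral_inner_eq_sum (hg : ∀ i, Integrable (fun a => g a i) μ) (x : EuclideanSpace ℝ ι) :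
    ∫ a, ⟪x, g a⟫ ∂μ = ∑ i, x i * ∫ a, g a i ∂μ := by
  simp only [PiLp.inner_apply, RCLike.inner_apply, conj_trivial]
  rw [integral_finsetSum _ fun i _ => (hg i).mul_const _]
  simp_rw [integral_mul_const, mul_comm]

theorem inner_mul_inner_eq_sum (x y u : EuclideanSpace ℝ ι) :
    ⟪x, u⟫ * ⟪y, u⟫ = ∑ i, ∑ j, x i * y j * (u i * u j) := by
  simp only [PiLp.inner_apply, RCLike.inner_apply, conj_trivial, Finset.sum_mul_sum]
  exact Finset.sum_congr rfl fun i _ => Finset.sum_congr rfl fun j _ => by ring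

theorem integrable_inner_mul_inner (hg : ∀ i j, Integrable (fun a => g a i * g a j) μ)
    (x y : EuclideanSpace ℝ ι) : Integrable (fun a => ⟪x, g a⟫ * ⟪y, g a⟫) μ := by
  simp only [inner_mul_inner_eq_sum]
  exact integrable_finsetSum _ fun i _ => integrable_finsetSum _ fun j _ => (hg i j).const_mul _

theorem integral_inner_mul_inner (hg : ∀ i j, Integrable (fun a => g a i * g a j) μ)
    (x y : EuclideanSpace ℝ ι) :
    ∫ a, ⟪x, g a⟫ * ⟪y, g a⟫ ∂μ = ∑ i, ∑ j, x i * y j * ∫ a, g a i * g a j ∂μ := by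
  simp only [inner_mul_inner_eq_sum]
  rw [integral_finsetSum _ fun i _ => integrable_finsetSum _ fun j _ => (hg i j).const_mul _]
  refine Finset.sum_congr rfl fun i _ => ?_
  rw [integral_finsetSum _ fun j _ => (hg i j).const_mul _]
  simp_rw [integral_const_mul]

end Moments

section Isotropic

variable {ρ : Measure (EuclideanSpace ℝ (Fin d))} [IsProbabilityMeasure ρ] {c : ℝ}

theorem inner_sub_sq_eq (w θ θ₀ : EuclideanSpace ℝ (Fin d)) :
    ⟪w, θ - θ₀⟫ ^ 2 = ⟪w, θ⟫ * ⟪w, θ⟫ - 2 * ⟪w, θ₀⟫ * ⟪w, θ⟫ + ⟪w, θ₀⟫ ^ 2 := by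
  rw [inner_sub_right]; ring

theorem integrable_inner_sub_sq
    (hmeanInt : ∀ i, Integrable (fun θ : EuclideanSpace ℝ (Fin d) => θ i) ρ)
    (hcovInt : ∀ i j, Integrable (fun θ : EuclideanSpace ℝ (Fin d) => θ i * θ j) ρ)
    (w θ₀ : EuclideanSpace ℝ (Fin d)) : Integrable (fun θ => ⟪w, θ - θ₀⟫ ^ 2) ρ := by
  simp only [inner_sub_sq_eq]
  exact ((integrable_inner_mul_inner (g := fun θ => θ) hcovInt w w).sub
    ((integrable_inner (g := fun θ => θ) hmeanInt w).const_mul _)).add (integrable_const _)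

theorem integral_inner_sub_sq
    (hmeanInt : ∀ i, Integrable (fun θ : EuclideanSpace ℝ (Fin d) => θ i) ρ)
    (hmean : ∀ i, ∫ θ, θ i ∂ρ = 0)
    (hcovInt : ∀ i j, Integrable (fun θ : EuclideanSpace ℝ (Fin d) => θ i * θ j) ρ)
    (hcov : ∀ i j, ∫ θ, θ i * θ j ∂ρ = if i = j then c ^ 2 else 0)
    (w θ₀ : EuclideanSpace ℝ (Fin d)) :
    ∫ θ, ⟪w, θ - θ₀⟫ ^ 2 ∂ρ = c ^ 2 * ‖w‖ ^ 2 + ⟪w, θ₀⟫ ^ 2 := by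
  have hint₂ : Integrable (fun θ : EuclideanSpace ℝ (Fin d) => ⟪w, θ⟫ * ⟪w, θ⟫) ρ :=
    integrable_inner_mul_inner (g := fun θ => θ) hcovInt w w
  have hint₁ : Integrable (fun θ : EuclideanSpace ℝ (Fin d) => 2 * ⟪w, θ₀⟫ * ⟪w, θ⟫) ρ :=
    (integrable_inner (g := fun θ => θ) hmeanInt w).const_mul _
  have hint₃ : Integrable (fun θ : EuclideanSpace ℝ (Fin d) =>
      ⟪w, θ⟫ * ⟪w, θ⟫ - 2 * ⟪w, θ₀⟫ * ⟪w, θ⟫) ρ := hint₂.sub hint₁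
  simp only [inner_sub_sq_eq]
  rw [integral_add hint₃ (integrable_const _), integral_sub hint₂ hint₁,
    integral_const_mul, integral_inner_mul_inner (g := fun θ => θ) hcovInt w w,
    integral_inner_eq_sum (g := fun θ => θ) hmeanInt w]
  simp only [hcov, hmean, mul_ite, mul_zero, Finset.sum_ite_eq, Finset.mem_univ, if_true,
    EuclideanSpace.real_norm_sq_eq, Finset.mul_sum, Finset.sum_const_zero, integral_const,
    probReal_univ, one_smul]
  simp only [mul_comm, sq]
  ring

end Isotropic

section EGOP

variable {f : EuclideanSpace ℝ (Fin d) → ℝ} {ρ : Measure (EuclideanSpace ℝ (Fin d))}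

theorem inner_toEuclideanLin_EGOP
    (hint : ∀ i j, Integrable (fun θ => gradient f θ i * gradient f θ j) ρ)
    (x y : EuclideanSpace ℝ (Fin d)) :
    ⟪x, (EGOP f ρ).toEuclideanLin y⟫ = ∫ θ, ⟪x, gradient f θ⟫ * ⟪y, gradient f θ⟫ ∂ρ := by
  rw [inner_toEuclideanLin_eq_sum, integral_inner_mul_inner hint]
  rfl

theorem isPositive_toEuclideanLin_EGOP
    (hint : ∀ i j, Integrable (fun θ => gradient f θ i * gradient f θ j) ρ) :
    (EGOP f ρ).toEuclideanLin.IsPositive := by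
  refine ⟨fun x y => ?_, fun x => ?_⟩
  · rw [real_inner_comm, inner_toEuclideanLin_EGOP hint, inner_toEuclideanLin_EGOP hint]
    simp_rw [mul_comm]
  · rw [RCLike.re_to_real, real_inner_comm, inner_toEuclideanLin_EGOP hint]
    exact integral_nonneg fun θ => mul_self_nonneg _

end EGOP

section Calculus

variable {f : EuclideanSpace ℝ (Fin d) → ℝ}

theorem ContDiff.differentiable_gradient (hf : ContDiff ℝ 2 f) : Differentiable ℝ (gradient f) :=
  (InnerProductSpace.toDual ℝ _).symm.differentiable.comp
    ((hf.fderiv_right (m := 1) le_rfl).differentiable one_ne_zero)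

theorem toEuclideanLin_hessMat (θ : EuclideanSpace ℝ (Fin d)) :
    (hessMat f θ).toEuclideanLin = (fderiv ℝ (gradient f) θ : _ →ₗ[ℝ] _) := by
  have : hessMat f θ = LinearMap.toMatrix (EuclideanSpace.basisFun (Fin d) ℝ).toBasis
      (EuclideanSpace.basisFun (Fin d) ℝ).toBasis (fderiv ℝ (gradient f) θ) := by
    ext i j; simp [hessMat, LinearMap.toMatrix_apply]
  rw [this, toEuclideanLin_eq_toLin_orthonormal, Matrix.toLin_toMatrix]

theorem DifferentiableAt.hasFDerivAt_hessMat {θ : EuclideanSpace ℝ (Fin d)}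
    (h : DifferentiableAt ℝ (gradient f) θ) :
    HasFDerivAt (gradient f) (hessMat f θ).toEuclideanLin.toContinuousLinearMap θ := by
  convert h.hasFDerivAt
  ext1 u
  simp [toEuclideanLin_hessMat]

end Calculus

section Smoothness

variable {f : EuclideanSpace ℝ (Fin d) → ℝ}

theorem HessLipschitz.nonneg {H : ℝ} (hH : HessLipschitz f H) {θ₁ θ₂ : EuclideanSpace ℝ (Fin d)}
    (h : θ₁ ≠ θ₂) : 0 ≤ H := by
  have h₁ : 0 < ‖θ₁ - θ₂‖ := norm_pos_iff.mpr (sub_ne_zero.mpr h)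
  have h₂ : 0 ≤ H * ‖θ₁ - θ₂‖ := (norm_nonneg _).trans (hH θ₁ θ₂)
  exact nonneg_of_mul_nonneg_left h₂ h₁

theorem HessLipschitz.norm_gradient_sub_sub_le {H : ℝ} (hH : HessLipschitz f H)
    (hf : Differentiable ℝ (gradient f)) (θ₀ θ : EuclideanSpace ℝ (Fin d)) :
    ‖gradient f θ - gradient f θ₀ - (hessMat f θ₀).toEuclideanLin (θ - θ₀)‖ ≤ H * ‖θ - θ₀‖ ^ 2 := by
  rcases eq_or_ne θ θ₀ with rfl | hne
  · simp
  set T := fun x => (hessMat f x).toEuclideanLin.toContinuousLinearMap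
  set r := ‖θ - θ₀‖
  have hderiv : ∀ x ∈ Metric.closedBall θ₀ r, HasFDerivWithinAt
      (fun x => gradient f x - T θ₀ x) (T x - T θ₀) (Metric.closedBall θ₀ r) x :=
    fun x _ => ((hf x).hasFDerivAt_hessMat.sub (T θ₀).hasFDerivAt).hasFDerivWithinAt
  have hbound : ∀ x ∈ Metric.closedBall θ₀ r, ‖T x - T θ₀‖ ≤ H * r := fun x hx =>
    calc ‖T x - T θ₀‖ = opNormM (hessMat f x - hessMat f θ₀) := by simp [T, opNormM, map_sub]
      _ ≤ H * ‖x - θ₀‖ := hH x θ₀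
      _ ≤ H * r := mul_le_mul_of_nonneg_left (mem_closedBall_iff_norm.mp hx) (hH.nonneg hne)
  have := (convex_closedBall θ₀ r).norm_image_sub_le_of_norm_hasFDerivWithin_le hderiv hbound
    (Metric.mem_closedBall_self (norm_nonneg _)) (mem_closedBall_iff_norm.mpr le_rfl)
  have hφ : gradient f θ - gradient f θ₀ - (hessMat f θ₀).toEuclideanLin (θ - θ₀) =
      gradient f θ - T θ₀ θ - (gradient f θ₀ - T θ₀ θ₀) := by
    simp only [T, LinearMap.coe_toContinuousLinearMap', map_sub]; abel
  rwa [hφ, sq, ← mul_assoc]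

theorem CoordSmooth.inner_gradient_sub_le {L : Fin d → ℝ} (hs : CoordSmooth f L)
    (x y : EuclideanSpace ℝ (Fin d)) :
    ⟪gradient f x - gradient f y, x - y⟫ ≤ ∑ i, L i * (x i - y i) ^ 2 := by
  have hxy := (abs_le.mp (hs x trivial y trivial)).2
  have hyx := (abs_le.mp (hs y trivial x trivial)).2
  have hsq : ∀ i, (y i - x i) ^ 2 = (x i - y i) ^ 2 := fun i => by ring
  simp only [← neg_sub x y, inner_neg_right, hsq] at hyx
  rw [inner_sub_left]
  linarith

theorem CoordSmooth.inner_hessMat_le {L : Fin d → ℝ} (hs : CoordSmooth f L)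
    {θ : EuclideanSpace ℝ (Fin d)} (hθ : DifferentiableAt ℝ (gradient f) θ)
    (u : EuclideanSpace ℝ (Fin d)) :
    ⟪u, (hessMat f θ).toEuclideanLin u⟫ ≤ ∑ i, L i * u i ^ 2 := by
  set g := fun t : ℝ => ⟪gradient f (θ + t • u), u⟫
  have hline : HasDerivAt (fun t : ℝ => θ + t • u) u 0 := by
    simpa using ((hasDerivAt_id (0 : ℝ)).smul_const u).const_add θ
  have hg : HasDerivAt g ⟪(hessMat f θ).toEuclideanLin u, u⟫ 0 :=
    ((hθ.hasFDerivAt_hessMat.comp_hasDerivAt_of_eq 0 hline (by simp)).inner ℝ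
      (hasDerivAt_const 0 u)).congr_deriv (by simp)
  have hslope : ∀ t ∈ Set.Ioi (0 : ℝ), t⁻¹ • (g (0 + t) - g 0) ≤ ∑ i, L i * u i ^ 2 := by
    intro t (ht : 0 < t)
    have h := hs.inner_gradient_sub_le (θ + t • u) θ
    have hcoord : ∑ i, L i * ((θ + t • u) i - θ i) ^ 2 = t * (t * ∑ i, L i * u i ^ 2) := by
      simp only [PiLp.add_apply, PiLp.smul_apply, smul_eq_mul, add_sub_cancel_left,
        Finset.mul_sum]
      exact Finset.sum_congr rfl fun i _ => by ring
    rw [add_sub_cancel_left, inner_smul_right, inner_sub_left, hcoord] at h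
    simp only [g, zero_add, zero_smul, add_zero, smul_eq_mul]
    rw [inv_mul_le_iff₀ ht]
    exact le_of_mul_le_mul_left h ht
  rw [real_inner_comm]
  exact le_of_tendsto hg.tendsto_slope_zero_right (eventually_nhdsWithin_of_forall hslope)

end Smoothness

section QuadraticModel

variable {f : EuclideanSpace ℝ (Fin d) → ℝ} {H : ℝ} {θs : EuclideanSpace ℝ (Fin d)}

theorem abs_inner_gradient_sq_sub_le (hH : HessLipschitz f H) (hf : Differentiable ℝ (gradient f))
    (hgrad : gradient f θs = 0) (hA : (hessMat f θs).PosSemidef) (u θ : EuclideanSpace ℝ (Fin d)) :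
    |⟪u, gradient f θ⟫ ^ 2 - ⟪(hessMat f θs).toEuclideanLin u, θ - θs⟫ ^ 2| ≤
      ‖u‖ ^ 2 * (2 * H * lambdaMax (hessMat f θs) * ‖θ - θs‖ ^ 3 + H ^ 2 * ‖θ - θs‖ ^ 4) := by
  set A := (hessMat f θs).toEuclideanLin
  have hsplit : ⟪u, gradient f θ⟫ = ⟪A u, θ - θs⟫ + ⟪u, gradient f θ - A (θ - θs)⟫ := by
    rw [inner_sub_right u, (isPositive_toEuclideanLin_iff.mpr hA).isSymmetric]; ring
  have hlin : |⟪A u, θ - θs⟫| ≤ lambdaMax (hessMat f θs) * ‖u‖ * ‖θ - θs‖ :=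
    (abs_real_inner_le_norm _ _).trans (by gcongr; exact hA.norm_toEuclideanLin_le u)
  have hrem : |⟪u, gradient f θ - A (θ - θs)⟫| ≤ ‖u‖ * (H * ‖θ - θs‖ ^ 2) :=
    (abs_real_inner_le_norm _ _).trans <| by
      gcongr; simpa [hgrad] using hH.norm_gradient_sub_sub_le hf θs θ
  rw [hsplit]
  exact (abs_add_sq_sub_sq_le hlin hrem).trans_eq (by ring)

theorem abs_inner_EGOP_sub_le {c : ℝ} {ρ : Measure (EuclideanSpace ℝ (Fin d))}
    [IsProbabilityMeasure ρ] (hH : HessLipschitz f H) (hf : Differentiable ℝ (gradient f))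
    (hgrad : gradient f θs = 0) (hA : (hessMat f θs).PosSemidef)
    (hint : ∀ i j, Integrable (fun θ => gradient f θ i * gradient f θ j) ρ)
    (hmeanInt : ∀ i, Integrable (fun θ : EuclideanSpace ℝ (Fin d) => θ i) ρ)
    (hmean : ∀ i, ∫ θ, θ i ∂ρ = 0)
    (hcovInt : ∀ i j, Integrable (fun θ : EuclideanSpace ℝ (Fin d) => θ i * θ j) ρ)
    (hcov : ∀ i j, ∫ θ, θ i * θ j ∂ρ = if i = j then c ^ 2 else 0)
    (hM3 : Integrable (fun θ : EuclideanSpace ℝ (Fin d) => ‖θ - θs‖ ^ 3) ρ)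
    (hM4 : Integrable (fun θ : EuclideanSpace ℝ (Fin d) => ‖θ - θs‖ ^ 4) ρ)
    (u : EuclideanSpace ℝ (Fin d)) :
    |⟪u, (EGOP f ρ).toEuclideanLin u⟫ - (c ^ 2 * ‖(hessMat f θs).toEuclideanLin u‖ ^ 2 +
        ⟪(hessMat f θs).toEuclideanLin u, θs⟫ ^ 2)| ≤
      (2 * H * lambdaMax (hessMat f θs) * (∫ θ, ‖θ - θs‖ ^ 3 ∂ρ) +
        H ^ 2 * (∫ θ, ‖θ - θs‖ ^ 4 ∂ρ)) * ‖u‖ ^ 2 := by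
  have hbound : Integrable (fun θ => ‖u‖ ^ 2 *
      (2 * H * lambdaMax (hessMat f θs) * ‖θ - θs‖ ^ 3 + H ^ 2 * ‖θ - θs‖ ^ 4)) ρ :=
    ((hM3.const_mul _).add (hM4.const_mul _)).const_mul _
  rw [inner_toEuclideanLin_EGOP hint, ← integral_inner_sub_sq hmeanInt hmean hcovInt hcov,
    ← integral_sub (integrable_inner_mul_inner hint u u)
      (integrable_inner_sub_sq hmeanInt hcovInt _ θs), ← Real.norm_eq_abs]
  refine (norm_integral_le_of_norm_le hbound (ae_of_all _ fun θ => ?_)).trans_eq ?_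
  · rw [Real.norm_eq_abs, ← sq]
    exact abs_inner_gradient_sq_sub_le hH hf hgrad hA u θ
  · rw [integral_const_mul, integral_add (hM3.const_mul _) (hM4.const_mul _),
      integral_const_mul, integral_const_mul, mul_comm]

end QuadraticModel

-- When `Q ≤ 0`, `√Q = 0` and the left side is `0` through the `x / 0 = 0` convention.
theorem div_mul_div_sqrt_le_of_mul_le {n c Q S x : ℝ} (hc : 0 < c) (hS : 0 ≤ S)
    (h : n * x ≤ 2 * c * √Q * S) : n / (2 * c) * (x / √Q) ≤ S := by
  rcases (Real.sqrt_nonneg Q).eq_or_lt with hQ | hQ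
  · rwa [← hQ, div_zero, mul_zero]
  · rw [div_mul_div_comm, div_le_iff₀ (by positivity)]
    linarith

theorem sum_coord_smoothness_ge_of_eigenpair_general
    (d : ℕ) (f : EuclideanSpace ℝ (Fin d) → ℝ) (H c : ℝ)
    (hf : ContDiff ℝ 3 f) (hH : HessLipschitz f H)
    (θs : EuclideanSpace ℝ (Fin d)) (hgrad : gradient f θs = 0)
    (hpsd : (hessMat f θs).PosSemidef)
    (ρ : Measure (EuclideanSpace ℝ (Fin d))) [IsProbabilityMeasure ρ]
    (hIntEGOP : ∀ i j, Integrable (fun θ => gradient f θ i * gradient f θ j) ρ)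
    (hmeanInt : ∀ i, Integrable (fun θ : EuclideanSpace ℝ (Fin d) => θ i) ρ)
    (hmean : ∀ i, ∫ θ, θ i ∂ρ = 0)
    (hcovInt : ∀ i j, Integrable (fun θ : EuclideanSpace ℝ (Fin d) => θ i * θ j) ρ)
    (hcov : ∀ i j, ∫ θ, θ i * θ j ∂ρ = if i = j then c ^ 2 else 0)
    (hc : ‖θs‖ ≤ c) (hcpos : 0 < c)
    (hM3 : Integrable (fun θ : EuclideanSpace ℝ (Fin d) => ‖θ - θs‖ ^ 3) ρ)
    (hM4 : Integrable (fun θ : EuclideanSpace ℝ (Fin d) => ‖θ - θs‖ ^ 4) ρ)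
    (γ : ℝ)
    (hγ : γ = 2 * Real.sqrt d * H * lambdaMax (hessMat f θs) * (∫ θ, ‖θ - θs‖ ^ 3 ∂ρ) +
      d * H ^ 2 * (∫ θ, ‖θ - θs‖ ^ 4 ∂ρ))
    (L : Fin d → ℝ) (hsmooth : CoordSmooth f L)
    (lam : ℝ) (v : EuclideanSpace ℝ (Fin d)) (hv : ‖v‖ = 1)
    (heig : Matrix.toEuclideanLin (EGOP f ρ) v = lam • v) :
    ∑ i, L i ≥
      (d / (2 * c)) *
        (((∑ i, |v i|) ^ 2 / d * lam - γ) / Real.sqrt (lambdaMax (EGOP f ρ) + γ)) := by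
  have hv0 : v ≠ 0 := by rintro rfl; simp at hv
  have hd : (1 : ℝ) ≤ d := Nat.one_le_cast.mpr <| Nat.pos_of_ne_zero <| by
    rintro rfl; exact hv0 (Subsingleton.elim _ _)
  have hfg := (hf.of_le (by norm_num)).differentiable_gradient
  have hApos := isPositive_toEuclideanLin_iff.mpr hpsd
  have hεγ : 2 * H * lambdaMax (hessMat f θs) * (∫ θ, ‖θ - θs‖ ^ 3 ∂ρ) +
      H ^ 2 * (∫ θ, ‖θ - θs‖ ^ 4 ∂ρ) ≤ γ := by
    have h₃ : 0 ≤ H * lambdaMax (hessMat f θs) * ∫ θ, ‖θ - θs‖ ^ 3 ∂ρ :=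
      mul_nonneg (mul_nonneg (hH.nonneg hv0) hpsd.lambdaMax_nonneg)
        (integral_nonneg fun _ => by positivity)
    have h₄ : 0 ≤ H ^ 2 * ∫ θ, ‖θ - θs‖ ^ 4 ∂ρ :=
      mul_nonneg (sq_nonneg H) (integral_nonneg fun _ => by positivity)
    rw [hγ]
    nlinarith [mul_le_mul_of_nonneg_right (Real.one_le_sqrt.mpr hd) h₃,
      mul_le_mul_of_nonneg_right hd h₄]
  set s := signVec v
  have hEs := hApos.le_of_abs_sub_le_mul_norm_sq (ε := γ) hcpos hc
    (inner_toEuclideanLin_le_lambdaMax_mul (EGOP f ρ)) (fun u =>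
      (abs_inner_EGOP_sub_le hH hfg hgrad hpsd hIntEGOP hmeanInt hmean hcovInt hcov hM3 hM4
        u).trans (by gcongr)) s
  have hAs : ⟪s, (hessMat f θs).toEuclideanLin s⟫ ≤ ∑ i, L i := by
    simpa [s, signVec_apply_sq] using hsmooth.inner_hessMat_le (hfg θs) s
  have hlam := (isPositive_toEuclideanLin_EGOP hIntEGOP).mul_inner_sq_le_of_apply_eq_smul heig hv s
  rw [inner_signVec] at hlam
  rw [norm_signVec_sq, Fintype.card_fin] at hEs
  refine div_mul_div_sqrt_le_of_mul_le hcpos ((hApos.inner_nonneg_right s).trans hAs) ?_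
  have := mul_le_mul_of_nonneg_left hAs
    (by positivity : 0 ≤ 2 * c * √(lambdaMax (EGOP f ρ) + γ))
  rw [mul_sub, ← mul_assoc, mul_div_cancel₀ _ (by positivity)]
  linarith

/-- lower bound on the sum of coordinate-wise smoothness constants of `f`: for every
unit-norm eigenpair `(λ_k, v_k)` of `EGOP(f)`, with `β_k := ‖v_k‖₁²/d`,
`Σᵢ Lᵢ ≥ (d/(2c)) · (β_k λ_k − γ)/√(λ_max(EGOP(f)) + γ)`. -/
theorem sum_coord_smoothness_ge_of_eigenpair
    (d : ℕ) (f : EuclideanSpace ℝ (Fin d) → ℝ) (H c : ℝ)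
    (hf : ContDiff ℝ 3 f) (hH : HessLipschitz f H)
    (θs : EuclideanSpace ℝ (Fin d)) (hgrad : gradient f θs = 0)
    (hpsd : (hessMat f θs).PosSemidef)
    (ρ : Measure (EuclideanSpace ℝ (Fin d))) [IsProbabilityMeasure ρ]
    (hIntEGOP : ∀ i j, Integrable (fun θ => gradient f θ i * gradient f θ j) ρ)
    (hmeanInt : ∀ i, Integrable (fun θ : EuclideanSpace ℝ (Fin d) => θ i) ρ)
    (hmean : ∀ i, ∫ θ, θ i ∂ρ = 0)
    (hcovInt : ∀ i j, Integrable (fun θ : EuclideanSpace ℝ (Fin d) => θ i * θ j) ρ)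
    (hcov : ∀ i j, ∫ θ, θ i * θ j ∂ρ = if i = j then c ^ 2 else 0)
    (hc : ‖θs‖ ≤ c) (hcpos : 0 < c)
    (hM3 : Integrable (fun θ : EuclideanSpace ℝ (Fin d) => ‖θ - θs‖ ^ 3) ρ)
    (hM4 : Integrable (fun θ : EuclideanSpace ℝ (Fin d) => ‖θ - θs‖ ^ 4) ρ)
    (γ : ℝ)
    (hγ : γ = 2 * Real.sqrt d * H * lambdaMax (hessMat f θs) * (∫ θ, ‖θ - θs‖ ^ 3 ∂ρ) +
      d * H ^ 2 * (∫ θ, ‖θ - θs‖ ^ 4 ∂ρ))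
    (hpos : 0 < lambdaMax (EGOP f ρ) + γ)
    (L : Fin d → ℝ) (hL : ∀ i, 0 < L i) (hsmooth : CoordSmooth f L)
    (lam : ℝ) (v : EuclideanSpace ℝ (Fin d)) (hv : ‖v‖ = 1)
    (heig : Matrix.toEuclideanLin (EGOP f ρ) v = lam • v) :
    ∑ i, L i ≥
      (d / (2 * c)) *
        (((∑ i, |v i|) ^ 2 / d * lam - γ) / Real.sqrt (lambdaMax (EGOP f ρ) + γ)) :=
  sum_coord_smoothness_ge_of_eigenpair_general d f H c hf hH θs hgrad hpsd ρ hIntEGOP hmeanInt hmean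
    hcovInt hcov hc hcpos hM3 hM4 γ hγ L hsmooth lam v hv heig
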